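/- arXiv:2402.06662 — 9 statements merged into one kernel-verified Lean document; each statement's English description precedes it below -/
import Mathlib

section
/- Let p, q, r, s be prime natural numbers with p ≠ q and r ≠ s, and suppose the unordered pairs {p, q} and {r, s} are not equal. Set t₁ = 2π/|√p − √q| and t₂ = 2π/|√r − √s| (the periods of the functions x ↦ cos((√p − √q)x) and x ↦ cos((√r − √s)x)). Then there exist no nonzero integers n₁, n₂ with n₁·t₁ = n₂·t₂. -/
/-!
Cancelling `2π` and squaring, `n₁ t₁ = n₂ t₂` becomes
`n₂² (p + q - 2√(pq)) = n₁² (r + s - 2√(rs))`. Since `pq` and `rs` are squarefree and not `1`, both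
square roots are irrational, and a rational combination of two irrational square roots of rationals
is rational only when it vanishes; hence `n₂² √(pq) = n₁² √(rs)`, i.e. `n₂⁴ pq = n₁⁴ rs`.
Comparing the (at most simple) prime factors of the squarefree numbers `pq` and `rs` gives `pq = rs`,
so `{p, q} = {r, s}`.
-/

lemma Irrational.eq_zero_of_mul_add_mul_eq_ratCast {x y : ℝ} (hx : Irrational x)
    (hy : Irrational y) {m n : ℚ} (hxm : x ^ 2 = m) (hyn : y ^ 2 = n) {a b c : ℚ}
    (h : a * x + b * y = c) : c = 0 := by
  by_contra hc
  by_cases hb : b = 0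
  · subst hb
    have ha : a ≠ 0 := by
      rintro rfl
      exact hc (by exact_mod_cast (by simpa using h : (0 : ℝ) = c).symm)
    exact hx ⟨c / a, by push_cast; field_simp; linear_combination -h⟩
  · -- squaring `a x = c - b y` leaves `y` only in the cross term `-2 b c y`
    exact hy ⟨(c ^ 2 + b ^ 2 * n - a ^ 2 * m) / (2 * b * c), by
      push_cast
      field_simp
      linear_combination -(c - b * y + a * x) * h + a ^ 2 * hxm - b ^ 2 * hyn⟩

lemma Squarefree.irrational_sqrt {n : ℕ} (hn : Squarefree n) (h1 : n ≠ 1) :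
    Irrational √(n : ℝ) := by
  rw [irrational_sqrt_natCast_iff]
  rintro ⟨k, rfl⟩
  exact h1 (by simp [Nat.isUnit_iff.1 (hn k dvd_rfl)])

lemma Squarefree.eq_of_sq_mul_eq {a b m n : ℕ} (hm : Squarefree m) (hn : Squarefree n)
    (ha : a ≠ 0) (h : a ^ 2 * m = b ^ 2 * n) : m = n := by
  have hb : b ≠ 0 := by
    rintro rfl
    simp [ha, hm.ne_zero] at h
  refine Nat.eq_of_factorization_eq hm.ne_zero hn.ne_zero fun t => ?_
  have ht := congrArg (Nat.factorization · t) h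
  simp only [Nat.factorization_mul (pow_ne_zero 2 ha) hm.ne_zero,
    Nat.factorization_mul (pow_ne_zero 2 hb) hn.ne_zero, Nat.factorization_pow,
    Finsupp.add_apply, Finsupp.smul_apply, smul_eq_mul] at ht
  have := hm.natFactorization_le_one t
  have := hn.natFactorization_le_one t
  omega

lemma Squarefree.eq_of_intCast_mul_sqrt_eq {m n : ℕ} (hm : Squarefree m) (hn : Squarefree n)
    {a b : ℤ} (ha : a ≠ 0) (h : (a : ℝ) * √(m : ℝ) = b * √(n : ℝ)) : m = n := by
  refine hm.eq_of_sq_mul_eq hn (b := b.natAbs) (Int.natAbs_ne_zero.2 ha) ?_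
  have hsq := congrArg (· ^ 2) h
  simp only [mul_pow, Real.sq_sqrt (Nat.cast_nonneg _)] at hsq
  zify
  simp only [sq_abs]
  exact_mod_cast hsq

lemma Nat.squarefree_mul_of_prime {p q : ℕ} (hp : p.Prime) (hq : q.Prime) (hpq : p ≠ q) :
    Squarefree (p * q) :=
  Nat.squarefree_mul_iff.2
    ⟨(Nat.coprime_primes hp hq).2 hpq, hp.prime.squarefree, hq.prime.squarefree⟩

lemma Nat.irrational_sqrt_mul_of_prime {p q : ℕ} (hp : p.Prime) (hq : q.Prime) (hpq : p ≠ q) :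
    Irrational √((p : ℝ) * q) := by
  simpa using (Nat.squarefree_mul_of_prime hp hq hpq).irrational_sqrt
    fun h => hp.ne_one (Nat.eq_one_of_mul_eq_one_right h)

lemma Nat.primeFactors_mul_of_prime {p q : ℕ} (hp : p.Prime) (hq : q.Prime) :
    (p * q).primeFactors = {p, q} := by
  rw [Nat.primeFactors_mul hp.ne_zero hq.ne_zero, hp.primeFactors, hq.primeFactors]
  rfl

lemma Real.sqrt_sub_sqrt_sq {x y : ℝ} (hx : 0 ≤ x) (hy : 0 ≤ y) :
    (√x - √y) ^ 2 = x + y - 2 * √(x * y) := by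
  rw [sub_sq, Real.sqrt_mul hx, Real.sq_sqrt hx, Real.sq_sqrt hy]
  ring

lemma Real.sqrt_natCast_sub_sqrt_natCast_ne_zero {p q : ℕ} (hpq : p ≠ q) :
    √(p : ℝ) - √(q : ℝ) ≠ 0 :=
  sub_ne_zero.2 fun h => hpq (by exact_mod_cast (Real.sqrt_inj p.cast_nonneg q.cast_nonneg).1 h)

lemma mul_sqrt_mul_eq_of_mul_sqrt_sub_sqrt_sq_eq {p q r s : ℕ} (hp : p.Prime) (hq : q.Prime)
    (hr : r.Prime) (hs : s.Prime) (hpq : p ≠ q) (hrs : r ≠ s) {a b : ℚ}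
    (h : a * (√(p : ℝ) - √(q : ℝ)) ^ 2 = b * (√(r : ℝ) - √(s : ℝ)) ^ 2) :
    a * √((p : ℝ) * q) = b * √((r : ℝ) * s) := by
  rw [Real.sqrt_sub_sqrt_sq (by positivity) (by positivity),
    Real.sqrt_sub_sqrt_sq (by positivity) (by positivity)] at h
  have hcomb : ((2 * a : ℚ) : ℝ) * √((p : ℝ) * q) + ((-2 * b : ℚ) : ℝ) * √((r : ℝ) * s)
      = ((a * (p + q) - b * (r + s) : ℚ) : ℝ) := by
    push_cast
    linear_combination -h
  have hc := (Nat.irrational_sqrt_mul_of_prime hp hq hpq).eq_zero_of_mul_add_mul_eq_ratCast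
    (Nat.irrational_sqrt_mul_of_prime hr hs hrs) (m := p * q) (n := r * s)
    (by push_cast; exact Real.sq_sqrt (by positivity))
    (by push_cast; exact Real.sq_sqrt (by positivity)) hcomb
  rw [hc] at hcomb
  push_cast at hcomb
  linarith

theorem periods_incommensurable
    (p q r s : ℕ) (hp : Nat.Prime p) (hq : Nat.Prime q) (hr : Nat.Prime r) (hs : Nat.Prime s)
    (hpq : p ≠ q) (hrs : r ≠ s)
    (hne : ({p, q} : Finset ℕ) ≠ ({r, s} : Finset ℕ))
    (t₁ t₂ : ℝ)
    (ht₁ : t₁ = 2 * Real.pi / |Real.sqrt p - Real.sqrt q|)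
    (ht₂ : t₂ = 2 * Real.pi / |Real.sqrt r - Real.sqrt s|) :
    ¬ ∃ n₁ n₂ : ℤ, n₁ ≠ 0 ∧ n₂ ≠ 0 ∧ (n₁ : ℝ) * t₁ = (n₂ : ℝ) * t₂ := by
  rintro ⟨n₁, n₂, -, hn₂, h⟩
  have hx := abs_ne_zero.2 (Real.sqrt_natCast_sub_sqrt_natCast_ne_zero hpq)
  have hy := abs_ne_zero.2 (Real.sqrt_natCast_sub_sqrt_natCast_ne_zero hrs)
  have hcancel : (n₁ : ℝ) * |√(r : ℝ) - √(s : ℝ)| = n₂ * |√(p : ℝ) - √(q : ℝ)| := by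
    rw [ht₁, ht₂] at h
    field_simp at h
    linarith [h, Real.pi_pos]
  have hsq : ((n₂ ^ 2 : ℚ) : ℝ) * (√(p : ℝ) - √(q : ℝ)) ^ 2
      = ((n₁ ^ 2 : ℚ) : ℝ) * (√(r : ℝ) - √(s : ℝ)) ^ 2 := by
    push_cast
    rw [← sq_abs (√(p : ℝ) - _), ← sq_abs (√(r : ℝ) - _), ← mul_pow, ← mul_pow, hcancel]
  have hsqrt := mul_sqrt_mul_eq_of_mul_sqrt_sub_sqrt_sq_eq hp hq hr hs hpq hrs hsq
  have hprod : p * q = r * s :=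
    (Nat.squarefree_mul_of_prime hp hq hpq).eq_of_intCast_mul_sqrt_eq
      (Nat.squarefree_mul_of_prime hr hs hrs) (pow_ne_zero 2 hn₂) (by exact_mod_cast hsqrt)
  exact hne <| by
    rw [← Nat.primeFactors_mul_of_prime hp hq, hprod, Nat.primeFactors_mul_of_prime hr hs]
end

section
/- Let N be a natural number, A : Fin N → Fin N → ℝ a symmetric matrix, and suppose: (i) there exists W : Fin N → ℝ² (Euclidean inner product space) such that for all i ≠ j, A i j > 0 if and only if ⟪W i, W j⟫ > 0 (A has a rank-2 sign representation); and (ii) every node is non-isolated, i.e., for every i there exists j ≠ i with A i j > 0 (implied by connectedness of the graph). Then for every real number x ≠ 0 there exists k : Fin N → ℝ such that for all i ≠ j, A i j > 0 if and only if cos((k i − k j)·x) > 0. -/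
/-!
Identify the plane isometrically with `ℂ`. Then `⟪u, v⟫ = ‖u‖ ‖v‖ cos (arg u - arg v)`, so for
nonzero vectors the inner product and the cosine of the difference of arguments have the same
sign, and `k i := arg (W i) / x` works. Every `W i` is nonzero because node `i` has a neighbour.
-/

open scoped RealInnerProductSpace

theorem Complex.inner_eq_norm_mul_norm_mul_cos_arg_sub (z w : ℂ) :
    ⟪z, w⟫ = ‖z‖ * ‖w‖ * Real.cos (z.arg - w.arg) := by
  rw [Complex.inner, Complex.mul_re, Complex.conj_re, Complex.conj_im, Real.cos_sub,
    ← Complex.norm_mul_cos_arg z, ← Complex.norm_mul_sin_arg z,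
    ← Complex.norm_mul_cos_arg w, ← Complex.norm_mul_sin_arg w]
  ring

theorem LinearIsometryEquiv.inner_pos_iff_cos_arg_sub_pos {E : Type*} [NormedAddCommGroup E]
    [InnerProductSpace ℝ E] (e : E ≃ₗᵢ[ℝ] ℂ) {u v : E} (hu : u ≠ 0) (hv : v ≠ 0) :
    0 < ⟪u, v⟫ ↔ 0 < Real.cos ((e u).arg - (e v).arg) := by
  have hnorm : 0 < ‖u‖ * ‖v‖ := mul_pos (norm_pos_iff.2 hu) (norm_pos_iff.2 hv)
  rw [← e.inner_map_map, Complex.inner_eq_norm_mul_norm_mul_cos_arg_sub, e.norm_map, e.norm_map]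
  exact mul_pos_iff_of_pos_left hnorm

theorem rank_two_graphs_trig_representable_general
    (N : ℕ) (A : Fin N → Fin N → ℝ)
    (W : Fin N → EuclideanSpace ℝ (Fin 2))
    (hrep : ∀ i j, i ≠ j → (A i j > 0 ↔ ⟪W i, W j⟫ > 0))
    (hconn : ∀ i, ∃ j, j ≠ i ∧ A i j > 0)
    (x : ℝ) (hx : x ≠ 0) :
    ∃ k : Fin N → ℝ, ∀ i j, i ≠ j →
      (A i j > 0 ↔ Real.cos ((k i - k j) * x) > 0) := by
  have hW : ∀ i, W i ≠ 0 := by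
    intro i hWi
    obtain ⟨j, hji, hA⟩ := hconn i
    simpa [hWi] using (hrep i j hji.symm).mp hA
  set e := Complex.orthonormalBasisOneI.repr.symm
  refine ⟨fun i => (e (W i)).arg / x, fun i j hij => ?_⟩
  rw [hrep i j hij, ← sub_div, div_mul_cancel₀ _ hx]
  exact e.inner_pos_iff_cos_arg_sub_pos (hW i) (hW j)

theorem rank_two_graphs_trig_representable
    (N : ℕ) (A : Fin N → Fin N → ℝ)
    (hsymm : ∀ i j, A i j = A j i)
    (W : Fin N → EuclideanSpace ℝ (Fin 2))
    (hrep : ∀ i j, i ≠ j → (A i j > 0 ↔ ⟪W i, W j⟫ > 0))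
    (hconn : ∀ i, ∃ j, j ≠ i ∧ A i j > 0)
    (x : ℝ) (hx : x ≠ 0) :
    ∃ k : Fin N → ℝ, ∀ i j, i ≠ j →
      (A i j > 0 ↔ Real.cos ((k i - k j) * x) > 0) :=
  rank_two_graphs_trig_representable_general N A W hrep hconn x hx
end

section
/- Let N be a natural number, A : Fin N → Fin N → ℝ a symmetric matrix, and suppose: (i) there exists W : Fin N → ℝ³ (Euclidean inner product space) such that for all i ≠ j, A i j > 0 if and only if ⟪W i, W j⟫ > 0 (A has a rank-3 sign representation); and (ii) every node is non-isolated, i.e., for every i there exists j ≠ i with A i j > 0 (implied by connectedness of the graph). Then for every real number x ≠ 0 there exist k, k' : Fin N → ℝ such that for all i ≠ j, A i j > 0 if and only if cos(k i · x)·cos(k j · x)·cos((k' i − k' j)·x) + sin(k i · x)·sin(k j · x) > 0. -/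
open scoped RealInnerProductSpace

/-!
A nonzero vector of `ℝ³` is a positive multiple of a point of the unit sphere, which has
spherical coordinates `(θ, φ)`; in these coordinates the inner product of two unit vectors is
`cos θ cos θ' cos (φ - φ') + sin θ sin θ'`. Rescaling does not change the sign of inner
products, and no `W i` vanishes because every node has a neighbour, so `k = θ / x` and
`k' = φ / x` work.
-/

open Real

noncomputable def sphericalPoint (θ φ : ℝ) : EuclideanSpace ℝ (Fin 3) :=
  !₂[cos θ * sin φ, cos θ * cos φ, sin θ]

lemma inner_sphericalPoint (θ φ θ' φ' : ℝ) :
    ⟪sphericalPoint θ φ, sphericalPoint θ' φ'⟫ =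
      cos θ * cos θ' * cos (φ - φ') + sin θ * sin θ' := by
  simp [sphericalPoint, PiLp.inner_apply, Fin.sum_univ_three, cos_sub]
  ring

lemma exists_sqrt_mul_sin_cos (a b : ℝ) :
    ∃ φ, √(a ^ 2 + b ^ 2) * sin φ = a ∧ √(a ^ 2 + b ^ 2) * cos φ = b := by
  refine ⟨Complex.arg ⟨b, a⟩, ?_, ?_⟩
  · simpa [Complex.norm_eq_sqrt_sq_add_sq, add_comm] using Complex.norm_mul_sin_arg ⟨b, a⟩
  · simpa [Complex.norm_eq_sqrt_sq_add_sq, add_comm] using Complex.norm_mul_cos_arg ⟨b, a⟩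

lemma exists_eq_norm_smul_sphericalPoint (v : EuclideanSpace ℝ (Fin 3)) :
    ∃ θ φ, v = ‖v‖ • sphericalPoint θ φ := by
  obtain ⟨φ, hsin, hcos⟩ := exists_sqrt_mul_sin_cos (v 0) (v 1)
  obtain ⟨θ, hsin', hcos'⟩ := exists_sqrt_mul_sin_cos (v 2) √(v 0 ^ 2 + v 1 ^ 2)
  have hnorm : ‖v‖ = √(v 2 ^ 2 + √(v 0 ^ 2 + v 1 ^ 2) ^ 2) := by
    rw [EuclideanSpace.norm_eq, Fin.sum_univ_three, sq_sqrt (by positivity)]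
    simp only [Real.norm_eq_abs, sq_abs]
    ring_nf
  refine ⟨θ, φ, ?_⟩
  ext t
  fin_cases t <;> simp [sphericalPoint, hnorm, ← mul_assoc, hcos', hsin', hsin, hcos]

theorem rank_three_graphs_trig_representable_general
    (N : ℕ) (A : Fin N → Fin N → ℝ)
    (W : Fin N → EuclideanSpace ℝ (Fin 3))
    (hrep : ∀ i j, i ≠ j → (A i j > 0 ↔ ⟪W i, W j⟫ > 0))
    (hconn : ∀ i, ∃ j, j ≠ i ∧ A i j > 0)
    (x : ℝ) (hx : x ≠ 0) :
    ∃ k k' : Fin N → ℝ, ∀ i j, i ≠ j →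
      (A i j > 0 ↔
        Real.cos (k i * x) * Real.cos (k j * x) * Real.cos ((k' i - k' j) * x)
          + Real.sin (k i * x) * Real.sin (k j * x) > 0) := by
  have hW : ∀ i, W i ≠ 0 := fun i hi => by
    obtain ⟨j, hji, hA⟩ := hconn i
    simpa [hi] using (hrep i j hji.symm).mp hA
  choose θ φ hθφ using fun i => exists_eq_norm_smul_sphericalPoint (W i)
  refine ⟨fun i => θ i / x, fun i => φ i / x, fun i j hij => ?_⟩
  have hscale : ⟪W i, W j⟫ =
      ‖W i‖ * ‖W j‖ * ⟪sphericalPoint (θ i) (φ i), sphericalPoint (θ j) (φ j)⟫ := by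
    conv_lhs => rw [hθφ i, hθφ j, real_inner_smul_left, real_inner_smul_right]
    ring
  rw [hrep i j hij, gt_iff_lt, gt_iff_lt, hscale,
    mul_pos_iff_of_pos_left (mul_pos (norm_pos_iff.2 (hW i)) (norm_pos_iff.2 (hW j))),
    inner_sphericalPoint, ← sub_div]
  simp only [div_mul_cancel₀ _ hx]

theorem rank_three_graphs_trig_representable
    (N : ℕ) (A : Fin N → Fin N → ℝ)
    (hsymm : ∀ i j, A i j = A j i)
    (W : Fin N → EuclideanSpace ℝ (Fin 3))
    (hrep : ∀ i j, i ≠ j → (A i j > 0 ↔ ⟪W i, W j⟫ > 0))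
    (hconn : ∀ i, ∃ j, j ≠ i ∧ A i j > 0)
    (x : ℝ) (hx : x ≠ 0) :
    ∃ k k' : Fin N → ℝ, ∀ i j, i ≠ j →
      (A i j > 0 ↔
        Real.cos (k i * x) * Real.cos (k j * x) * Real.cos ((k' i - k' j) * x)
          + Real.sin (k i * x) * Real.sin (k j * x) > 0) :=
  rank_three_graphs_trig_representable_general N A W hrep hconn x hx
end

section
/- There exist a natural number N and a function A : Fin N → Fin N → Bool with A i j = A j i for all i, j and A i i = false for all i (the adjacency of a simple undirected graph), such that for every real N×2 matrix R and every real 2×N matrix C there exist indices i ≠ j with ¬(A i j = true ↔ (R·C) i j > 0). In other words, no real matrix of the form R·C (hence no real matrix of rank at most 2) reproduces the sign pattern of A on its off-diagonal entries. -/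
private def X5 (va vb : Fin 5 → ℝ) (i j : Fin 5) : ℝ := va i * vb j - va j * vb i

private def D5 (va vb vc vd : Fin 5 → ℝ) (i j : Fin 5) : ℝ := va i * vc j + vb i * vd j

private lemma core (va vb vc vd : Fin 5 → ℝ)
    (hpos : ∀ i, 0 < D5 va vb vc vd i i)
    (hneg : ∀ i j, i ≠ j → D5 va vb vc vd i j ≤ 0) : False := by
  set X := X5 va vb with hX
  set D := D5 va vb vc vd with hD
  have skew : ∀ i j, X j i = - X i j := by
    intro i j; simp only [hX, X5]; ring
  have idA : ∀ c p q : Fin 5, X p q * D c c = X c q * D p c - X c p * D q c := by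
    intro c p q; simp only [hX, hD, X5, D5]; ring
  have idB : ∀ p q r s : Fin 5,
      D p q * D r s - D r q * D p s = X p r * (vc q * vd s - vc s * vd q) := by
    intro p q r s; simp only [hX, hD, X5, D5]; ring
  have keyA : ∀ c p q : Fin 5, p ≠ c → q ≠ c → 0 ≤ X c p → X c q ≤ 0 → 0 ≤ X p q := by
    intro c p q hp hq h1 h2
    have hpc := hneg p c hp
    have hqc := hneg q c hq
    have hcc := hpos c
    by_contra hlt
    push_neg at hlt
    nlinarith [idA c p q, mul_nonneg (neg_nonneg.2 h2) (neg_nonneg.2 hpc),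
      mul_nonneg h1 (neg_nonneg.2 hqc), mul_pos hcc (neg_pos.2 hlt)]
  have Lout : ∀ i j k : Fin 5, i ≠ j → i ≠ k → j ≠ k → 0 < X i j → 0 < X i k → False := by
    intro i j k hij hik hjk h1 h2
    rcases le_or_gt (X j k) 0 with h | h
    · have hkj : (0:ℝ) ≤ X k j := by rw [skew j k]; linarith
      have hki : X k i ≤ 0 := by rw [skew i k]; linarith
      have := keyA k j i hjk hik hkj hki
      rw [skew i j] at this; linarith
    · have hji : X j i ≤ 0 := by rw [skew i j]; linarith
      have := keyA j k i (Ne.symm hjk) hij (le_of_lt h) hji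
      rw [skew i k] at this; linarith
  have Lin : ∀ i j k : Fin 5, i ≠ j → i ≠ k → j ≠ k → X i j < 0 → X i k < 0 → False := by
    intro i j k hij hik hjk h1 h2
    rcases le_or_gt (X j k) 0 with h | h
    · have hji : (0:ℝ) ≤ X j i := by rw [skew i j]; linarith
      have := keyA j i k hij (Ne.symm hjk) hji h
      linarith
    · have hki : (0:ℝ) ≤ X k i := by rw [skew i k]; linarith
      have hkj : X k j ≤ 0 := by rw [skew j k]; linarith
      have := keyA k i j hik hjk hki hkj
      linarith
  have F3 : ∀ i j k : Fin 5, i ≠ j → i ≠ k → j ≠ k → X i j = 0 → X i k = 0 → False := by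
    intro i j k hij hik hjk e1 e2
    have hii := hpos i; have hjj := hpos j; have hkk := hpos k
    have hij1 := hneg i j hij
    have hji1 := hneg j i (Ne.symm hij)
    have hik1 := hneg i k hik
    have hki1 := hneg k i (Ne.symm hik)
    have hjk1 := hneg j k hjk
    have zji : X j i = 0 := by rw [skew i j, e1]; ring
    have zki : X k i = 0 := by rw [skew i k, e2]; ring
    have E1 : D j j * D i i = D i j * D j i := by
      have h := idB j j i i
      rw [zji, zero_mul] at h
      linarith
    have E2 : D k k * D i i = D i k * D k i := by
      have h := idB k k i i
      rw [zki, zero_mul] at h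
      linarith
    have P1 : 0 < D i j * D j i := by rw [← E1]; exact mul_pos hjj hii
    have P2 : 0 < D i k * D k i := by rw [← E2]; exact mul_pos hkk hii
    have hDji : D j i < 0 := by
      rcases lt_or_eq_of_le hji1 with h | h
      · exact h
      · rw [h, mul_zero] at P1; linarith
    have hDik : D i k < 0 := by
      rcases lt_or_eq_of_le hik1 with h | h
      · exact h
      · rw [h, zero_mul] at P2; linarith
    have E3 : D j k * D i i = D i k * D j i := by
      have h := idB j k i i
      rw [zji, zero_mul] at h
      linarith
    nlinarith [mul_pos_of_neg_of_neg hDik hDji]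
  rcases lt_trichotomy (X 0 1) 0 with h1 | h1 | h1 <;>
  rcases lt_trichotomy (X 0 2) 0 with h2 | h2 | h2 <;>
  rcases lt_trichotomy (X 0 3) 0 with h3 | h3 | h3 <;>
  rcases lt_trichotomy (X 0 4) 0 with h4 | h4 | h4 <;>
  first
    | exact Lin 0 1 2 (by decide) (by decide) (by decide) h1 h2
    | exact Lin 0 1 3 (by decide) (by decide) (by decide) h1 h3
    | exact Lin 0 1 4 (by decide) (by decide) (by decide) h1 h4
    | exact Lin 0 2 3 (by decide) (by decide) (by decide) h2 h3
    | exact Lin 0 2 4 (by decide) (by decide) (by decide) h2 h4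
    | exact Lin 0 3 4 (by decide) (by decide) (by decide) h3 h4
    | exact Lout 0 1 2 (by decide) (by decide) (by decide) h1 h2
    | exact Lout 0 1 3 (by decide) (by decide) (by decide) h1 h3
    | exact Lout 0 1 4 (by decide) (by decide) (by decide) h1 h4
    | exact Lout 0 2 3 (by decide) (by decide) (by decide) h2 h3
    | exact Lout 0 2 4 (by decide) (by decide) (by decide) h2 h4
    | exact Lout 0 3 4 (by decide) (by decide) (by decide) h3 h4
    | exact F3 0 1 2 (by decide) (by decide) (by decide) h1 h2
    | exact F3 0 1 3 (by decide) (by decide) (by decide) h1 h3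
    | exact F3 0 1 4 (by decide) (by decide) (by decide) h1 h4
    | exact F3 0 2 3 (by decide) (by decide) (by decide) h2 h3
    | exact F3 0 2 4 (by decide) (by decide) (by decide) h2 h4
    | exact F3 0 3 4 (by decide) (by decide) (by decide) h3 h4

theorem not_all_graphs_rank_two :
    ∃ (N : ℕ) (A : Fin N → Fin N → Bool),
      (∀ i j, A i j = A j i) ∧ (∀ i, A i i = false) ∧
      ∀ (R : Matrix (Fin N) (Fin 2) ℝ) (C : Matrix (Fin 2) (Fin N) ℝ),
        ∃ i j, i ≠ j ∧ ¬(A i j = true ↔ (R * C) i j > 0) := by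
  refine ⟨10, fun i j => decide (i.val + 5 = j.val ∨ j.val + 5 = i.val), by decide, by decide, ?_⟩
  intro R C
  by_contra hcon
  push_neg at hcon
  apply core (fun m => R ⟨m.1, by have := m.isLt; omega⟩ 0)
    (fun m => R ⟨m.1, by have := m.isLt; omega⟩ 1)
    (fun m => C 0 ⟨m.1 + 5, by have := m.isLt; omega⟩)
    (fun m => C 1 ⟨m.1 + 5, by have := m.isLt; omega⟩)
  · intro m
    have hm5 := m.isLt
    have h1 : m.1 < 10 := by omega
    have h2 : m.1 + 5 < 10 := by omega
    have hne : (⟨m.1, h1⟩ : Fin 10) ≠ ⟨m.1 + 5, h2⟩ :=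
      Fin.ne_of_val_ne (by simp only [Fin.val_mk]; omega)
    have hOr : ((⟨m.1, h1⟩ : Fin 10)).1 + 5 = ((⟨m.1 + 5, h2⟩ : Fin 10)).1 ∨
        ((⟨m.1 + 5, h2⟩ : Fin 10)).1 + 5 = ((⟨m.1, h1⟩ : Fin 10)).1 := Or.inl rfl
    have h := (hcon ⟨m.1, h1⟩ ⟨m.1 + 5, h2⟩ hne).mp (decide_eq_true hOr)
    rw [Matrix.mul_apply, Fin.sum_univ_two] at h
    simp only [D5]
    exact h
  · intro m n hmn
    have hm5 := m.isLt
    have hn5 := n.isLt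
    have hvne : m.1 ≠ n.1 := fun h => hmn (Fin.ext h)
    have h1 : m.1 < 10 := by omega
    have h2 : n.1 + 5 < 10 := by omega
    have hne : (⟨m.1, h1⟩ : Fin 10) ≠ ⟨n.1 + 5, h2⟩ :=
      Fin.ne_of_val_ne (by simp only [Fin.val_mk]; omega)
    have hnot : ¬(((⟨m.1, h1⟩ : Fin 10)).1 + 5 = ((⟨n.1 + 5, h2⟩ : Fin 10)).1 ∨
        ((⟨n.1 + 5, h2⟩ : Fin 10)).1 + 5 = ((⟨m.1, h1⟩ : Fin 10)).1) := by
      simp only [Fin.val_mk]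
      omega
    have hle : ¬(0 < (R * C) ⟨m.1, h1⟩ ⟨n.1 + 5, h2⟩) :=
      fun hp => hnot (of_decide_eq_true ((hcon ⟨m.1, h1⟩ ⟨n.1 + 5, h2⟩ hne).mpr hp))
    have hle2 := not_lt.mp hle
    rw [Matrix.mul_apply, Fin.sum_univ_two] at hle2
    simp only [D5]
    exact hle2
end

section
/- Let c₁, c₂, r₄, r₅, r₆, r₇ be vectors in the Euclidean plane ℝ². Assume ⟪r_i, c₁⟫ > 0 for each i ∈ {4,5,6,7}, and ⟪r₄, c₂⟫ > 0, ⟪r₅, c₂⟫ > 0, ⟪r₆, c₂⟫ ≤ 0, ⟪r₇, c₂⟫ ≤ 0. Then there exists no vector c₃ ∈ ℝ² with ⟪r₄, c₃⟫ > 0, ⟪r₆, c₃⟫ > 0, ⟪r₅, c₃⟫ ≤ 0, and ⟪r₇, c₃⟫ ≤ 0. -/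
/-!
If `c₂` is a multiple `t • c₁`, then `r₄` forces `t > 0` and `r₆` forces `t ≤ 0`. Otherwise `c₁, c₂`
span the plane and `c₃ = a • c₁ + b • c₂`. If `b ≥ 0`, then `r₅` forces `a ≤ 0`, which contradicts
`⟪r₆, c₃⟫ > 0`; if `b < 0`, then `r₄` forces `a > 0`, which contradicts `⟪r₇, c₃⟫ ≤ 0`.
-/

open scoped RealInnerProductSpace

open Module Submodule in
theorem exists_smul_eq_or_forall_mem_span_pair {K V : Type*} [Field K] [AddCommGroup V]
    [Module K V] (hV : finrank K V = 2) {x : V} (hx : x ≠ 0) (y : V) :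
    (∃ t : K, t • x = y) ∨ ∀ z : V, ∃ a b : K, a • x + b • y = z := by
  by_cases hxy : LinearIndependent K ![x, y]
  · right
    intro z
    have hspan := hxy.span_eq_top_of_card_eq_finrank (by simp [hV])
    rw [Matrix.range_cons, Matrix.range_cons, Matrix.range_empty, Set.union_empty,
      Set.singleton_union] at hspan
    exact mem_span_pair.mp (hspan ▸ mem_top)
  · left
    simpa [LinearIndependent.pair_iff' hx] using hxy

theorem no_separating_vector
    (c₁ c₂ r₄ r₅ r₆ r₇ : EuclideanSpace ℝ (Fin 2))
    (h4 : ⟪r₄, c₁⟫ > 0) (h5 : ⟪r₅, c₁⟫ > 0) (h6 : ⟪r₆, c₁⟫ > 0) (h7 : ⟪r₇, c₁⟫ > 0)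
    (h4' : ⟪r₄, c₂⟫ > 0) (h5' : ⟪r₅, c₂⟫ > 0) (h6' : ⟪r₆, c₂⟫ ≤ 0) (h7' : ⟪r₇, c₂⟫ ≤ 0) :
    ¬ ∃ c₃ : EuclideanSpace ℝ (Fin 2),
      ⟪r₄, c₃⟫ > 0 ∧ ⟪r₆, c₃⟫ > 0 ∧ ⟪r₅, c₃⟫ ≤ 0 ∧ ⟪r₇, c₃⟫ ≤ 0 := by
  rintro ⟨c₃, g4, g6, g5, g7⟩
  have hc₁ : c₁ ≠ 0 := by rintro rfl; simp at h4
  rcases exists_smul_eq_or_forall_mem_span_pair finrank_euclideanSpace_fin hc₁ c₂ with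
    ⟨t, rfl⟩ | hspan
  · rw [inner_smul_right] at h4' h6'
    have ht : 0 < t := pos_of_mul_pos_left h4' h4.le
    exact (mul_pos ht h6).not_ge h6'
  · obtain ⟨a, b, rfl⟩ := hspan c₃
    simp only [inner_add_right, inner_smul_right] at g4 g5 g6 g7
    rcases le_or_gt 0 b with hb | hb
    · have ha : a ≤ 0 := nonpos_of_mul_nonpos_left (by linarith [mul_nonneg hb h5'.le]) h5
      linarith [mul_nonpos_of_nonpos_of_nonneg ha h6.le, mul_nonpos_of_nonneg_of_nonpos hb h6']
    · have ha : 0 < a := pos_of_mul_pos_left (by linarith [mul_neg_of_neg_of_pos hb h4']) h4.le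
      linarith [mul_pos ha h7, mul_nonneg_of_nonpos_of_nonpos hb.le h7']
end

section
/- There do not exist vectors w₁, w₂, w₃, w₄ in the Euclidean plane ℝ² such that ⟪w₁, w₂⟫ > 0, ⟪w₁, w₃⟫ > 0, ⟪w₁, w₄⟫ > 0, and ⟪w₂, w₃⟫ ≤ 0, ⟪w₂, w₄⟫ ≤ 0, ⟪w₃, w₄⟫ ≤ 0. -/
/-! Take `a = w₁` and an area form `ω` on the plane. The identity
`⟪a, x⟫ * ⟪a, y⟫ + ω a x * ω a y = ‖a‖ ^ 2 * ⟪x, y⟫` shows that two vectors making an acute angle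
with `a` but a non-acute angle with each other lie on strictly opposite sides of the line `ℝ a`.
Three vectors cannot be pairwise on opposite sides of a line. -/

open scoped RealInnerProductSpace
open Module

theorem mul_pos_of_mul_neg_of_mul_neg {R : Type*} [CommRing R] [LinearOrder R]
    [IsStrictOrderedRing R] {p q r : R} (hq : p * q < 0) (hr : p * r < 0) :
    0 < q * r := by
  nlinarith [sq_nonneg p, mul_pos_of_neg_of_neg hq hr]

section TwoDim

variable {E : Type*} [NormedAddCommGroup E] [InnerProductSpace ℝ E] [Fact (finrank ℝ E = 2)]

theorem Orientation.areaForm_mul_areaForm_neg_of_inner_nonpos (o : Orientation ℝ E (Fin 2))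
    {a x y : E} (hx : 0 < ⟪a, x⟫) (hy : 0 < ⟪a, y⟫) (hxy : ⟪x, y⟫ ≤ 0) :
    o.areaForm a x * o.areaForm a y < 0 := by
  have := o.inner_mul_inner_add_areaForm_mul_areaForm a x y
  nlinarith [mul_pos hx hy, mul_nonpos_of_nonneg_of_nonpos (sq_nonneg ‖a‖) hxy]

theorem inner_pos_of_inner_nonpos_of_inner_pos {a u v w : E} (hu : 0 < ⟪a, u⟫)
    (hv : 0 < ⟪a, v⟫) (hw : 0 < ⟪a, w⟫) (huv : ⟪u, v⟫ ≤ 0) (huw : ⟪u, w⟫ ≤ 0) :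
    0 < ⟪v, w⟫ := by
  by_contra! hvw
  have : FiniteDimensional ℝ E := .of_fact_finrank_eq_two
  let o : Orientation ℝ E (Fin 2) := (finBasisOfFinrankEq ℝ E Fact.out).orientation
  have hvw_sides := o.areaForm_mul_areaForm_neg_of_inner_nonpos hv hw hvw
  have hvw_same_side := mul_pos_of_mul_neg_of_mul_neg
    (o.areaForm_mul_areaForm_neg_of_inner_nonpos hu hv huv)
    (o.areaForm_mul_areaForm_neg_of_inner_nonpos hu hw huw)
  exact hvw_sides.not_gt hvw_same_side

end TwoDim

theorem three_star_not_rank_two :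
    ¬ ∃ w₁ w₂ w₃ w₄ : EuclideanSpace ℝ (Fin 2),
      ⟪w₁, w₂⟫ > 0 ∧ ⟪w₁, w₃⟫ > 0 ∧ ⟪w₁, w₄⟫ > 0 ∧
      ⟪w₂, w₃⟫ ≤ 0 ∧ ⟪w₂, w₄⟫ ≤ 0 ∧ ⟪w₃, w₄⟫ ≤ 0 := by
  rintro ⟨w₁, w₂, w₃, w₄, h₂, h₃, h₄, h₂₃, h₂₄, h₃₄⟩
  have : Fact (finrank ℝ (EuclideanSpace ℝ (Fin 2)) = 2) := ⟨by simp⟩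
  exact h₃₄.not_gt (inner_pos_of_inner_nonpos_of_inner_pos h₂ h₃ h₄ h₂₃ h₂₄)
end

section
/- Let m, n be natural numbers with m ≥ 2, n ≥ 2, and m·n > 4. Define the grid adjacency on nodes Fin m × Fin n by: u and v are adjacent iff either their first coordinates are equal and their second coordinates (as natural numbers) differ by exactly 1, or their second coordinates are equal and their first coordinates differ by exactly 1. Then there exists no map Z : Fin m × Fin n → ℝ² (Euclidean inner product space) such that for all u ≠ v, u and v are adjacent if and only if ⟪Z u, Z v⟫ > 0. -/
open scoped RealInnerProductSpace

private lemma key_pair (v0 v1 x0 x1 y0 y1 : ℝ)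
    (hx : 0 < v0*x0+v1*x1) (hy : 0 < v0*y0+v1*y1) (hxy : x0*y0+x1*y1 ≤ 0) :
    (v0*x1 - v1*x0) * (v0*y1 - v1*y0) < 0 := by
  nlinarith [mul_pos hx hy,
    mul_nonpos_of_nonneg_of_nonpos (by positivity : (0:ℝ) ≤ v0^2+v1^2) hxy]

private lemma key (v0 v1 a0 a1 b0 b1 c0 c1 : ℝ)
    (h1 : 0 < v0*a0+v1*a1) (h2 : 0 < v0*b0+v1*b1) (h3 : 0 < v0*c0+v1*c1)
    (h12 : a0*b0+a1*b1 ≤ 0) (h13 : a0*c0+a1*c1 ≤ 0) (h23 : b0*c0+b1*c1 ≤ 0) : False := by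
  have p12 := key_pair v0 v1 a0 a1 b0 b1 h1 h2 h12
  have p13 := key_pair v0 v1 a0 a1 c0 c1 h1 h3 h13
  have p23 := key_pair v0 v1 b0 b1 c0 c1 h2 h3 h23
  nlinarith [mul_pos_of_neg_of_neg p12 p13, p23, sq_nonneg (v0*a1 - v1*a0)]

private lemma no_claw (v w1 w2 w3 : EuclideanSpace ℝ (Fin 2))
    (h1 : 0 < ⟪v,w1⟫) (h2 : 0 < ⟪v,w2⟫) (h3 : 0 < ⟪v,w3⟫)
    (h12 : ⟪w1,w2⟫ ≤ 0) (h13 : ⟪w1,w3⟫ ≤ 0) (h23 : ⟪w2,w3⟫ ≤ 0) : False := by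
  simp only [PiLp.inner_apply, RCLike.inner_apply, conj_trivial, Fin.sum_univ_two] at *
  exact key (v 0) (v 1) (w1 0) (w1 1) (w2 0) (w2 1) (w3 0) (w3 1)
    (by linarith) (by linarith) (by linarith) (by linarith) (by linarith) (by linarith)

theorem grid_graph_not_rank_two (m n : ℕ) (hm : 2 ≤ m) (hn : 2 ≤ n) (hmn : 4 < m * n) :
    ¬ ∃ Z : Fin m × Fin n → EuclideanSpace ℝ (Fin 2),
      ∀ u v : Fin m × Fin n, u ≠ v →
        (((u.1 = v.1 ∧ (u.2.val + 1 = v.2.val ∨ v.2.val + 1 = u.2.val)) ∨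
          (u.2 = v.2 ∧ (u.1.val + 1 = v.1.val ∨ v.1.val + 1 = u.1.val))) ↔
          ⟪Z u, Z v⟫ > 0) := by
  rintro ⟨Z, h⟩
  have hcase : 3 ≤ m ∨ 3 ≤ n := by
    rcases Nat.lt_or_ge m 3 with hm3 | hm3
    · right; by_contra hn3; push_neg at hn3; interval_cases m <;> interval_cases n <;> omega
    · left; exact hm3
  rcases hcase with h3 | h3
  · -- m ≥ 3 : center v = (1,0), leaves (0,0),(2,0),(1,1)
    set v : Fin m × Fin n := (⟨1, by omega⟩, ⟨0, by omega⟩) with hv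
    set w1 : Fin m × Fin n := (⟨0, by omega⟩, ⟨0, by omega⟩) with hw1
    set w2 : Fin m × Fin n := (⟨2, by omega⟩, ⟨0, by omega⟩) with hw2
    set w3 : Fin m × Fin n := (⟨1, by omega⟩, ⟨1, by omega⟩) with hw3
    have ne1 : v ≠ w1 := by simp [hv, hw1, Prod.ext_iff, Fin.ext_iff]
    have ne2 : v ≠ w2 := by simp [hv, hw2, Prod.ext_iff, Fin.ext_iff]
    have ne3 : v ≠ w3 := by simp [hv, hw3, Prod.ext_iff, Fin.ext_iff]
    have ne12 : w1 ≠ w2 := by simp [hw1, hw2, Prod.ext_iff, Fin.ext_iff]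
    have ne13 : w1 ≠ w3 := by simp [hw1, hw3, Prod.ext_iff, Fin.ext_iff]
    have ne23 : w2 ≠ w3 := by simp [hw2, hw3, Prod.ext_iff, Fin.ext_iff]
    have a1 : 0 < ⟪Z v, Z w1⟫ := (h v w1 ne1).mp (by
      right; exact ⟨by simp [hv, hw1], Or.inr (by simp [hv, hw1])⟩)
    have a2 : 0 < ⟪Z v, Z w2⟫ := (h v w2 ne2).mp (by
      right; exact ⟨by simp [hv, hw2], Or.inl (by simp [hv, hw2])⟩)
    have a3 : 0 < ⟪Z v, Z w3⟫ := (h v w3 ne3).mp (by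
      left; exact ⟨by simp [hv, hw3], Or.inl (by simp [hv, hw3])⟩)
    have b12 : ⟪Z w1, Z w2⟫ ≤ 0 := not_lt.mp (fun hp => by
      have := (h w1 w2 ne12).mpr hp
      simp [hw1, hw2, Fin.ext_iff] at this)
    have b13 : ⟪Z w1, Z w3⟫ ≤ 0 := not_lt.mp (fun hp => by
      have := (h w1 w3 ne13).mpr hp
      simp [hw1, hw3, Fin.ext_iff] at this)
    have b23 : ⟪Z w2, Z w3⟫ ≤ 0 := not_lt.mp (fun hp => by
      have := (h w2 w3 ne23).mpr hp
      simp [hw2, hw3, Fin.ext_iff] at this)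
    exact no_claw (Z v) (Z w1) (Z w2) (Z w3) a1 a2 a3 b12 b13 b23
  · -- n ≥ 3 : center v = (0,1), leaves (0,0),(0,2),(1,1)
    set v : Fin m × Fin n := (⟨0, by omega⟩, ⟨1, by omega⟩) with hv
    set w1 : Fin m × Fin n := (⟨0, by omega⟩, ⟨0, by omega⟩) with hw1
    set w2 : Fin m × Fin n := (⟨0, by omega⟩, ⟨2, by omega⟩) with hw2
    set w3 : Fin m × Fin n := (⟨1, by omega⟩, ⟨1, by omega⟩) with hw3
    have ne1 : v ≠ w1 := by simp [hv, hw1, Prod.ext_iff, Fin.ext_iff]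
    have ne2 : v ≠ w2 := by simp [hv, hw2, Prod.ext_iff, Fin.ext_iff]
    have ne3 : v ≠ w3 := by simp [hv, hw3, Prod.ext_iff, Fin.ext_iff]
    have ne12 : w1 ≠ w2 := by simp [hw1, hw2, Prod.ext_iff, Fin.ext_iff]
    have ne13 : w1 ≠ w3 := by simp [hw1, hw3, Prod.ext_iff, Fin.ext_iff]
    have ne23 : w2 ≠ w3 := by simp [hw2, hw3, Prod.ext_iff, Fin.ext_iff]
    have a1 : 0 < ⟪Z v, Z w1⟫ := (h v w1 ne1).mp (by
      left; exact ⟨by simp [hv, hw1], Or.inr (by simp [hv, hw1])⟩)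
    have a2 : 0 < ⟪Z v, Z w2⟫ := (h v w2 ne2).mp (by
      left; exact ⟨by simp [hv, hw2], Or.inl (by simp [hv, hw2])⟩)
    have a3 : 0 < ⟪Z v, Z w3⟫ := (h v w3 ne3).mp (by
      right; exact ⟨by simp [hv, hw3], Or.inl (by simp [hv, hw3])⟩)
    have b12 : ⟪Z w1, Z w2⟫ ≤ 0 := not_lt.mp (fun hp => by
      have := (h w1 w2 ne12).mpr hp
      simp [hw1, hw2, Fin.ext_iff] at this)
    have b13 : ⟪Z w1, Z w3⟫ ≤ 0 := not_lt.mp (fun hp => by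
      have := (h w1 w3 ne13).mpr hp
      simp [hw1, hw3, Fin.ext_iff] at this)
    have b23 : ⟪Z w2, Z w3⟫ ≤ 0 := not_lt.mp (fun hp => by
      have := (h w2 w3 ne23).mpr hp
      simp [hw2, hw3, Fin.ext_iff] at this)
    exact no_claw (Z v) (Z w1) (Z w2) (Z w3) a1 a2 a3 b12 b13 b23
end

section
/- Let N ≥ 3 and f ≥ 1 be natural numbers and let w : Fin N → ℝ^f (Euclidean inner product space) satisfy: ⟪w 0, w i⟫ > 0 for every i ≠ 0, and ⟪w i, w j⟫ ≤ 0 for all i ≠ j with i ≠ 0 and j ≠ 0. Then N + 1 ≤ 2·f. -/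
open scoped RealInnerProductSpace

open Finset in
/-- Vectors lying strictly in an open halfspace with pairwise nonpositive inner
products are linearly independent. -/
lemma linearIndependent_of_obtuse {E : Type*} [NormedAddCommGroup E]
    [InnerProductSpace ℝ E] {ι : Type*} [Fintype ι] (u : ι → E) (c : E)
    (hpos : ∀ i, 0 < ⟪c, u i⟫) (hneg : ∀ i j, i ≠ j → ⟪u i, u j⟫ ≤ 0) :
    LinearIndependent ℝ u := by
  classical
  rw [Fintype.linearIndependent_iff]
  intro g hg
  set P : Finset ι := Finset.univ.filter (fun i => 0 ≤ g i) with hP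
  set x : E := ∑ i ∈ P, g i • u i with hx
  set y : E := ∑ i ∈ Pᶜ, (-g i) • u i with hy
  have hgP : ∀ i ∈ P, 0 ≤ g i := by intro i hi; simpa [hP] using hi
  have hgPc : ∀ i ∈ Pᶜ, 0 ≤ -g i := by
    intro i hi
    simp only [hP, Finset.mem_compl, Finset.mem_filter, Finset.mem_univ, true_and,
      not_le] at hi
    linarith
  have hxy : x = y := by
    have h0 : x - y = 0 := by
      rw [hx, hy]
      have h1 : ∑ i ∈ Pᶜ, (-g i) • u i = -∑ i ∈ Pᶜ, g i • u i := by
        simp [neg_smul]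
      rw [h1, sub_neg_eq_add, Finset.sum_add_sum_compl, hg]
    exact sub_eq_zero.mp h0
  have hxx : ⟪x, y⟫ ≤ 0 := by
    rw [hx, hy, sum_inner]
    refine Finset.sum_nonpos fun i hi => ?_
    rw [inner_sum]
    refine Finset.sum_nonpos fun j hj => ?_
    rw [real_inner_smul_left, real_inner_smul_right]
    have hij : i ≠ j := fun h => (Finset.mem_compl.mp hj) (h ▸ hi)
    exact mul_nonpos_of_nonneg_of_nonpos (hgP i hi)
      (mul_nonpos_of_nonneg_of_nonpos (hgPc j hj) (hneg i j hij))
  have hx0 : x = 0 := by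
    rw [← hxy] at hxx
    rw [← inner_self_eq_zero (𝕜 := ℝ)]
    exact le_antisymm hxx real_inner_self_nonneg
  have hy0 : y = 0 := hxy ▸ hx0
  have hPzero : ∀ i ∈ P, g i = 0 := by
    have hsum : ∑ i ∈ P, g i * ⟪c, u i⟫ = 0 := by
      have h2 : ⟪c, x⟫ = 0 := by rw [hx0, inner_zero_right]
      rw [hx, inner_sum] at h2
      simpa [real_inner_smul_right] using h2
    intro i hi
    have h3 := (Finset.sum_eq_zero_iff_of_nonneg fun j hj =>
      mul_nonneg (hgP j hj) (hpos j).le).mp hsum i hi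
    exact (mul_eq_zero.mp h3).resolve_right (ne_of_gt (hpos i))
  have hPczero : ∀ i ∈ Pᶜ, -g i = 0 := by
    have hsum : ∑ i ∈ Pᶜ, (-g i) * ⟪c, u i⟫ = 0 := by
      have h2 : ⟪c, y⟫ = 0 := by rw [hy0, inner_zero_right]
      rw [hy, inner_sum] at h2
      simpa [real_inner_smul_right] using h2
    intro i hi
    have h3 := (Finset.sum_eq_zero_iff_of_nonneg fun j hj =>
      mul_nonneg (hgPc j hj) (hpos j).le).mp hsum i hi
    exact (mul_eq_zero.mp h3).resolve_right (ne_of_gt (hpos i))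
  intro i
  by_cases hi : i ∈ P
  · exact hPzero i hi
  · have := hPczero i (Finset.mem_compl.mpr hi); linarith

theorem star_graph_rank_lower_bound
    (N f : ℕ) (hN : 3 ≤ N) (hf : 1 ≤ f)
    (w : Fin N → EuclideanSpace ℝ (Fin f))
    (hcenter : ∀ i : Fin N, i ≠ ⟨0, by omega⟩ → ⟪w ⟨0, by omega⟩, w i⟫ > 0)
    (hleaves : ∀ i j : Fin N, i ≠ j → i ≠ ⟨0, by omega⟩ → j ≠ ⟨0, by omega⟩ →
      ⟪w i, w j⟫ ≤ 0) :
    N + 1 ≤ 2 * f := by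
  set z : Fin N := ⟨0, by omega⟩
  set u : {i : Fin N // i ≠ z} → EuclideanSpace ℝ (Fin f) := fun i => w i.1
  have hli : LinearIndependent ℝ u :=
    linearIndependent_of_obtuse u (w z) (fun i => hcenter i.1 i.2)
      (fun i j hij => hleaves i.1 j.1 (fun h => hij (Subtype.ext h)) i.2 j.2)
  have hcard : Fintype.card {i : Fin N // i ≠ z} ≤ f := by
    have := hli.fintype_card_le_finrank
    simpa [finrank_euclideanSpace] using this
  have : Fintype.card {i : Fin N // i ≠ z} = N - 1 := by
    simp [Fintype.card_subtype_compl]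
  omega
end

section
/- For every natural number N, there exists z : Fin (N+1) → ℂ such that Re(z 0 · z i) > 0 for every i ≠ 0, and Re(z i · z j) ≤ 0 for all i ≠ j with i ≠ 0 and j ≠ 0. -/
theorem star_graph_complex_rank_one (N : ℕ) :
    ∃ z : Fin (N + 1) → ℂ,
      (∀ i, i ≠ 0 → (z 0 * z i).re > 0) ∧
      (∀ i j, i ≠ j → i ≠ 0 → j ≠ 0 → (z i * z j).re ≤ 0) := by
  refine ⟨fun i => if i = 0 then -Complex.I else Complex.I, ?_, ?_⟩
  · intro i hi
    simp [hi]
  · intro i j _ hi hj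
    simp [hi, hj, Complex.I_mul_I]
end
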